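/- arXiv:2202.12770 — 2 statements merged into one kernel-verified Lean document; each statement's English description precedes it below -/
import Mathlib

section
/- Let (𝕏, d) and (𝕊, σ) be metric spaces and Φ : 𝕏 → 𝕊 a Lipschitz continuous map which is also a homeomorphism of 𝕏 onto 𝕊. Let (μ_n) be Borel probability measures on 𝕏, (a_n) positive reals tending to infinity, and I : 𝕏 → [0,∞] lower semicontinuous. Assume (μ_n) satisfies the extended large deviation bounds in 𝕏 with speed a_n and rate I. Define I'(y) = inf{ I(x) : Φ(x) = y } = I(Φ⁻¹(y)) and ν_n = μ_n ∘ Φ⁻¹. Then I' is lower semicontinuous on 𝕊 (its sublevel sets {y : I'(y) ≤ M} = Φ({x : I(x) ≤ M}) are closed for every M ≥ 0), and (ν_n) satisfies the extended large deviation bounds in 𝕊 with speed a_n and rate I'. -/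
open Set Filter MeasureTheory Metric ENNReal

noncomputable section

/-- The normalized log-probability `a_n⁻¹ · log μ_n(A)` (with `log 0 = -∞`), as an `EReal`. -/
def logProbRate (a : ℕ → ℝ) (p : ℕ → ℝ≥0∞) : ℕ → EReal :=
  fun n => (((a n)⁻¹ : ℝ) : EReal) * ENNReal.log (p n)

/-- The extended-LDP lower bound: for every open `G`,
`liminf a_n⁻¹ log μ_n(G) ≥ - inf_{x ∈ G} I(x)`. -/
def ExtLDPLowerBound {X : Type*} [MetricSpace X] [MeasurableSpace X]
    (μ : ℕ → Measure X) (a : ℕ → ℝ) (I : X → ℝ≥0∞) : Prop :=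
  ∀ G : Set X, IsOpen G →
    -(⨅ x ∈ G, (I x : EReal)) ≤
      Filter.liminf (logProbRate a (fun n => μ n G)) Filter.atTop

/-- The extended-LDP upper bound: for every closed `F`,
`limsup a_n⁻¹ log μ_n(F) ≤ - sup_{ε > 0} inf_{x ∈ F^ε} I(x)`,
where `F^ε` is the closed `ε`-thickening of `F`. -/
def ExtLDPUpperBound {X : Type*} [MetricSpace X] [MeasurableSpace X]
    (μ : ℕ → Measure X) (a : ℕ → ℝ) (I : X → ℝ≥0∞) : Prop :=
  ∀ F : Set X, IsClosed F →
    Filter.limsup (logProbRate a (fun n => μ n F)) Filter.atTop ≤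
      -(⨆ (ε : ℝ) (_ : 0 < ε), ⨅ x ∈ Metric.cthickening ε F, (I x : EReal))

/-- The pushforward rate function `I'(y) = inf { I(x) : Φ(x) = y }`. -/
def pushRate {X S : Type*} (Φ : X → S) (I : X → ℝ≥0∞) : S → ℝ≥0∞ :=
  fun y => ⨅ (x : X) (_ : Φ x = y), I x

/-!
Both large deviation bounds transfer along any continuous map `Φ`, because
`inf_{y ∈ A} I'(y) = inf_{x ∈ Φ⁻¹(A)} I(x)` for every `A` and `ν_n(A) = μ_n(Φ⁻¹(A))`:
open sets pull back to open sets, and for the upper bound uniform continuity of `Φ`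
(implied by the Lipschitz property) gives, for each `δ > 0`, an `ε > 0` with
`(Φ⁻¹ F)^ε ⊆ Φ⁻¹(F^δ)`. Injectivity and surjectivity are only needed for the rate
function itself: for a homeomorphism `I' = I ∘ Φ⁻¹`, which is lower semicontinuous with
sublevel sets `Φ({I ≤ M})`.
-/

theorem EReal.coe_ennreal_iInf {ι : Sort*} (f : ι → ℝ≥0∞) :
    ((⨅ i, f i : ℝ≥0∞) : EReal) = ⨅ i, (f i : EReal) :=
  Monotone.map_iInf_of_continuousAt continuous_coe_ennreal_ereal.continuousAt
    (fun _ _ h => EReal.coe_ennreal_le_coe_ennreal_iff.2 h) EReal.coe_ennreal_top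

theorem UniformContinuous.exists_cthickening_preimage_subset {α β : Type*}
    [PseudoMetricSpace α] [PseudoMetricSpace β] {f : α → β} (hf : UniformContinuous f)
    (t : Set β) {δ : ℝ} (hδ : 0 < δ) :
    ∃ ε > 0, cthickening ε (f ⁻¹' t) ⊆ f ⁻¹' cthickening δ t := by
  obtain ⟨η, hη, hfη⟩ := Metric.uniformContinuous_iff.1 hf δ hδ
  refine ⟨η / 2, half_pos hη, fun x hx => ?_⟩
  obtain ⟨z, hz, hxz⟩ :=
    mem_thickening_iff.1 (cthickening_subset_thickening' hη (half_lt_self hη) _ hx)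
  exact thickening_subset_cthickening δ t (mem_thickening_iff.2 ⟨f z, hz, hfη hxz⟩)

section pushRate

variable {X S : Type*} (Φ : X → S) (I : X → ℝ≥0∞)

theorem biInf_pushRate (t : Set S) :
    ⨅ y ∈ t, (pushRate Φ I y : EReal) = ⨅ x ∈ Φ ⁻¹' t, (I x : EReal) := by
  simp only [pushRate, EReal.coe_ennreal_iInf]
  exact le_antisymm
    (le_iInf₂ fun x hx => iInf₂_le_of_le (Φ x) hx (iInf_le_of_le x (iInf_le _ rfl)))
    (le_iInf₂ fun y hy => le_iInf₂ fun x hx => iInf₂_le x (show Φ x ∈ t from hx ▸ hy))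

theorem pushRate_equiv (e : X ≃ S) : pushRate e I = I ∘ e.symm :=
  funext fun y => le_antisymm (iInf₂_le (e.symm y) (e.apply_symm_apply y))
    (le_iInf₂ fun x hx => by rw [Function.comp_apply, ← hx, e.symm_apply_apply])

end pushRate

section transfer

variable {X S : Type*} [MetricSpace X] [MeasurableSpace X] [OpensMeasurableSpace X]
  [MetricSpace S] [MeasurableSpace S] [BorelSpace S]
  {Φ : X → S} {μ : ℕ → Measure X} {a : ℕ → ℝ} {I : X → ℝ≥0∞}

theorem ExtLDPLowerBound.map (hΦ : Continuous Φ) (h : ExtLDPLowerBound μ a I) :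
    ExtLDPLowerBound (fun n => (μ n).map Φ) a (pushRate Φ I) := by
  intro G hG
  simp only [Measure.map_apply hΦ.measurable hG.measurableSet, biInf_pushRate]
  exact h _ (hG.preimage hΦ)

theorem ExtLDPUpperBound.map (hΦ : UniformContinuous Φ) (h : ExtLDPUpperBound μ a I) :
    ExtLDPUpperBound (fun n => (μ n).map Φ) a (pushRate Φ I) := by
  intro F hF
  simp only [Measure.map_apply hΦ.continuous.measurable hF.measurableSet, biInf_pushRate]
  refine (h _ (hF.preimage hΦ.continuous)).trans (EReal.neg_le_neg_iff.2 ?_)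
  refine iSup₂_le fun δ hδ => ?_
  obtain ⟨ε, hε, hsub⟩ := hΦ.exists_cthickening_preimage_subset F hδ
  exact le_iSup₂_of_le ε hε (biInf_mono hsub)

end transfer

theorem extended_contraction_principle_homeomorph_general
    {X S : Type*} [MetricSpace X] [MeasurableSpace X] [BorelSpace X]
    [MetricSpace S] [MeasurableSpace S] [BorelSpace S]
    (Φ : X → S) (L : NNReal) (hΦ : LipschitzWith L Φ) (hhom : IsHomeomorph Φ)
    (μ : ℕ → Measure X)
    (a : ℕ → ℝ)
    (I : X → ℝ≥0∞) (hI : LowerSemicontinuous I)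
    (hlow : ExtLDPLowerBound μ a I) (hup : ExtLDPUpperBound μ a I) :
    LowerSemicontinuous (pushRate Φ I) ∧
    (∀ M : ℝ≥0∞, {y : S | pushRate Φ I y ≤ M} = Φ '' {x : X | I x ≤ M} ∧
      IsClosed {y : S | pushRate Φ I y ≤ M}) ∧
    ExtLDPLowerBound (fun n => (μ n).map Φ) a (pushRate Φ I) ∧
    ExtLDPUpperBound (fun n => (μ n).map Φ) a (pushRate Φ I) := by
  set e := hhom.homeomorph Φ
  have hrate : pushRate Φ I = I ∘ e.symm := pushRate_equiv I e.toEquiv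
  have hlsc : LowerSemicontinuous (pushRate Φ I) := hrate ▸ hI.comp e.symm.continuous
  refine ⟨hlsc, fun M => ⟨?_, hlsc.isClosed_preimage M⟩, hlow.map hhom.continuous,
    hup.map hΦ.uniformContinuous⟩
  rw [hrate]
  exact (e.image_eq_preimage_symm {x | I x ≤ M}).symm

/-- If `Φ` is a Lipschitz homeomorphism and `(μ_n)` satisfies the extended
LDP bounds in `𝕏` with speed `a_n` and lower semicontinuous rate `I`, then
`I'(y) = inf{I(x) : Φ(x) = y}` is lower semicontinuous (equivalently, its sublevel sets
`Φ({I ≤ M})` are closed) and the pushforward measures `ν_n = μ_n ∘ Φ⁻¹` satisfy the extended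
LDP bounds in `𝕊` with speed `a_n` and rate `I'`. -/
theorem extended_contraction_principle_homeomorph
    {X S : Type*} [MetricSpace X] [MeasurableSpace X] [BorelSpace X]
    [MetricSpace S] [MeasurableSpace S] [BorelSpace S]
    (Φ : X → S) (L : NNReal) (hΦ : LipschitzWith L Φ) (hhom : IsHomeomorph Φ)
    (μ : ℕ → Measure X) (hprob : ∀ n, IsProbabilityMeasure (μ n))
    (a : ℕ → ℝ) (ha : ∀ n, 0 < a n) (ha' : Filter.Tendsto a Filter.atTop Filter.atTop)
    (I : X → ℝ≥0∞) (hI : LowerSemicontinuous I)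
    (hlow : ExtLDPLowerBound μ a I) (hup : ExtLDPUpperBound μ a I) :
    LowerSemicontinuous (pushRate Φ I) ∧
    (∀ M : ℝ≥0∞, {y : S | pushRate Φ I y ≤ M} = Φ '' {x : X | I x ≤ M} ∧
      IsClosed {y : S | pushRate Φ I y ≤ M}) ∧
    ExtLDPLowerBound (fun n => (μ n).map Φ) a (pushRate Φ I) ∧
    ExtLDPUpperBound (fun n => (μ n).map Φ) a (pushRate Φ I) :=
  extended_contraction_principle_homeomorph_general Φ L hΦ hhom μ a I hI hlow hup
end
end

section
/- (Tandem optimization: extreme-point evaluation.) Let α ∈ (0,1), c₁ > 0, c₂ > 0, k > 0, M > 0 and y > 0. Consider the set S = {(x₁, x₂) ∈ ℝ² : x₂ + k x₁ = y, 0 ≤ x₁ ≤ M, x₂ ≥ 0}. Then the infimum of c₁x₁^α + c₂x₂^α over S is attained and equals: min( c₂ y^α, c₁ (y/k)^α ) if y ≤ kM, and min( c₂ y^α, c₁ M^α + c₂ (y − kM)^α ) if y > kM. -/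
open Set Real

/-!
Parametrize the segment by `x₁ ∈ [0, B]` with `B = min M (y / k)` and `x₂ = y - k x₁`. Along it the
objective is a sum of concave functions `x₁ ↦ c₁ x₁ ^ α` and `x₁ ↦ c₂ (y - k x₁) ^ α`, and a concave
function on an interval is minimized at an endpoint. The endpoint `x₁ = 0` gives `c₂ y ^ α`; the
endpoint `x₁ = B` gives `c₁ (y / k) ^ α` or `c₁ M ^ α + c₂ (y - k M) ^ α` according to which of
`y / k` and `M` is smaller.
-/

lemma ConcaveOn.isLeast_image_Icc {f : ℝ → ℝ} {a b : ℝ} (hab : a ≤ b)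
    (hf : ConcaveOn ℝ (Icc a b) f) : IsLeast (f '' Icc a b) (min (f a) (f b)) := by
  have ha : a ∈ Icc a b := left_mem_Icc.2 hab
  have hb : b ∈ Icc a b := right_mem_Icc.2 hab
  refine ⟨?_, forall_mem_image.2 fun z hz => hf.min_le_of_mem_Icc ha hb hz⟩
  rcases min_choice (f a) (f b) with h | h <;> rw [h]
  exacts [mem_image_of_mem f ha, mem_image_of_mem f hb]

lemma concaveOn_rpow_sub_mul {α : ℝ} (h₀ : 0 ≤ α) (h₁ : α ≤ 1) (y k : ℝ) :
    ConcaveOn ℝ {t | 0 ≤ y - k * t} (fun t => (y - k * t) ^ α) := by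
  have hline : ∀ t : ℝ, AffineMap.lineMap y (y - k) t = y - k * t := fun t => by
    rw [AffineMap.lineMap_apply_ring']; ring
  convert (concaveOn_rpow h₀ h₁).comp_affineMap (AffineMap.lineMap (k := ℝ) y (y - k)) using 1 <;>
    ext t <;> simp only [mem_ofPred_eq, mem_preimage, mem_Ici, Function.comp_apply, hline]

noncomputable def tandemCost (α c₁ c₂ k y t : ℝ) : ℝ := c₁ * t ^ α + c₂ * (y - k * t) ^ α

lemma concaveOn_tandemCost {α c₁ c₂ k y B : ℝ} (h₀ : 0 ≤ α) (h₁ : α ≤ 1)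
    (hc₁ : 0 ≤ c₁) (hc₂ : 0 ≤ c₂) (hk : 0 ≤ k) (hB : k * B ≤ y) :
    ConcaveOn ℝ (Icc 0 B) (tandemCost α c₁ c₂ k y) := by
  have hsub : Icc 0 B ⊆ {t | 0 ≤ y - k * t} := fun t ht => by
    simp only [mem_ofPred_eq, sub_nonneg]
    nlinarith [ht.2]
  exact (((concaveOn_rpow h₀ h₁).subset Icc_subset_Ici_self (convex_Icc 0 B)).smul hc₁).add
    (((concaveOn_rpow_sub_mul h₀ h₁ y k).subset hsub (convex_Icc 0 B)).smul hc₂)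

lemma tandem_feasible_values_eq_image {α c₁ c₂ k M y : ℝ} (hk : 0 < k) :
    {r : ℝ | ∃ x₁ x₂ : ℝ, x₂ + k * x₁ = y ∧ 0 ≤ x₁ ∧ x₁ ≤ M ∧ 0 ≤ x₂ ∧
        r = c₁ * x₁ ^ α + c₂ * x₂ ^ α} =
      tandemCost α c₁ c₂ k y '' Icc 0 (min M (y / k)) := by
  ext r
  simp only [mem_ofPred_eq, mem_image, mem_Icc, le_min_iff, le_div_iff₀ hk, tandemCost]
  constructor
  · rintro ⟨x₁, x₂, hline, hx₁, hx₁M, hx₂, rfl⟩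
    exact ⟨x₁, ⟨hx₁, hx₁M, by linarith⟩, by rw [← hline, add_sub_cancel_right]⟩
  · rintro ⟨x₁, ⟨hx₁, hx₁M, hx₁y⟩, rfl⟩
    exact ⟨x₁, y - k * x₁, by ring, hx₁, hx₁M, by linarith, rfl⟩

lemma tandemCost_zero {α : ℝ} (hα : α ≠ 0) (c₁ c₂ k y : ℝ) :
    tandemCost α c₁ c₂ k y 0 = c₂ * y ^ α := by
  simp [tandemCost, zero_rpow hα]

lemma tandemCost_min {α c₁ c₂ k M y : ℝ} (hα : α ≠ 0) (hk : 0 < k) :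
    tandemCost α c₁ c₂ k y (min M (y / k)) =
      if y ≤ k * M then c₁ * (y / k) ^ α else c₁ * M ^ α + c₂ * (y - k * M) ^ α := by
  split_ifs with hyM
  · rw [min_eq_right ((div_le_iff₀' hk).2 hyM), tandemCost, mul_div_cancel₀ y hk.ne', sub_self,
      zero_rpow hα, mul_zero, add_zero]
  · rw [min_eq_left ((le_div_iff₀' hk).2 (not_le.1 hyM).le), tandemCost]

/-- (Tandem optimization: extreme-point evaluation.) The infimum of
`c₁x₁^α + c₂x₂^α` over the segment `{x₂ + k x₁ = y, 0 ≤ x₁ ≤ M, x₂ ≥ 0}` is attained and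
equals `min(c₂ y^α, c₁ (y/k)^α)` if `y ≤ kM`, and
`min(c₂ y^α, c₁ M^α + c₂ (y - kM)^α)` if `y > kM`. -/
theorem tandem_extreme_point_minimum
    (α c₁ c₂ k M y : ℝ) (hα : α ∈ Set.Ioo (0:ℝ) 1)
    (hc₁ : 0 < c₁) (hc₂ : 0 < c₂) (hk : 0 < k) (hM : 0 < M) (hy : 0 < y) :
    IsLeast {r : ℝ | ∃ x₁ x₂ : ℝ, x₂ + k * x₁ = y ∧ 0 ≤ x₁ ∧ x₁ ≤ M ∧ 0 ≤ x₂ ∧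
        r = c₁ * x₁ ^ α + c₂ * x₂ ^ α}
      (if y ≤ k * M then min (c₂ * y ^ α) (c₁ * (y / k) ^ α)
       else min (c₂ * y ^ α) (c₁ * M ^ α + c₂ * (y - k * M) ^ α)) := by
  obtain ⟨hα₀, hα₁⟩ := hα
  have hB₀ : 0 ≤ min M (y / k) := le_min hM.le (div_pos hy hk).le
  have hBy : k * min M (y / k) ≤ y := (le_div_iff₀' hk).1 (min_le_right M (y / k))
  have hleast := ConcaveOn.isLeast_image_Icc hB₀
    (concaveOn_tandemCost hα₀.le hα₁.le hc₁.le hc₂.le hk.le hBy)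
  rw [tandemCost_zero hα₀.ne', tandemCost_min hα₀.ne' hk] at hleast
  rw [tandem_feasible_values_eq_image hk]
  split_ifs at hleast ⊢ <;> exact hleast
end
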